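/- Let X be a simple graph on n vertices. If X is acyclic (its girth is infinite), then FS(X, Star_n) is acyclic (its girth is infinite). -/

import Mathlib

/-!
Sending a bijection `σ` to `σ⁻¹ c`, the vertex of `X` sitting on the centre `c` of the star, is
a graph homomorphism `FS X Star_n → X`: every edge of `FS X Star_n` swaps the occupant of the
centre with one of its `X`-neighbours. It is injective on neighbourhoods, because a neighbour
of `σ` is determined by which vertex it moves onto the centre. A homomorphism that is injective
on neighbourhoods maps a cycle to a closed walk that never immediately backtracks, and in a
forest such a walk is a path, hence trivial.
-/

open SimpleGraph

/-- The friends-and-strangers graph `FS X Y`: its vertices are the bijections from `V(X)`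
to `V(Y)`, with `σ, τ` adjacent iff they differ by a swap along an edge of `X` whose
images under `σ` form an edge of `Y`. -/
def FS {V W : Type*} (X : SimpleGraph V) (Y : SimpleGraph W) : SimpleGraph (V ≃ W) where
  Adj σ τ := ∃ a b : V, X.Adj a b ∧ Y.Adj (σ a) (σ b) ∧ τ a = σ b ∧ τ b = σ a ∧
      ∀ c : V, c ≠ a → c ≠ b → τ c = σ c
  symm := by
    refine ⟨?_⟩
    rintro σ τ ⟨a, b, hX, hY, h1, h2, h3⟩
    refine ⟨a, b, hX, ?_, h2.symm, h1.symm, fun c hca hcb => (h3 c hca hcb).symm⟩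
    rw [h1, h2]; exact hY.symm
  loopless := by
    refine ⟨?_⟩
    rintro σ ⟨a, b, hX, hY, h1, h2, h3⟩
    exact hY.ne h1

/-- The star graph on `Fin n`: the vertex with value `n - 1` (playing the role of the
vertex `n` of `{1, …, n}`) is adjacent to all other vertices, and there are no
other edges. -/
def starGraph (n : ℕ) : SimpleGraph (Fin n) where
  Adj a b := a ≠ b ∧ (a.val = n - 1 ∨ b.val = n - 1)
  symm := by refine ⟨?_⟩; rintro a b ⟨h1, h2⟩; exact ⟨h1.symm, h2.symm⟩
  loopless := by refine ⟨?_⟩; rintro a ⟨h, _⟩; exact h rfl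


namespace SimpleGraph

variable {V V' : Type*} {G : SimpleGraph V} {G' : SimpleGraph V'}

theorem Walk.isChain_ne_edges_map (f : G →g G')
    (hf : ∀ v, Set.InjOn f (G.neighborSet v)) :
    ∀ {u w : V} (p : G.Walk u w),
      p.edges.IsChain (· ≠ ·) → (p.map f).edges.IsChain (· ≠ ·)
  | _, _, .nil, _ => by simp
  | _, _, .cons _ .nil, _ => by simp
  | _, _, .cons h (.cons h' q), hp => by
    rw [edges_cons, edges_cons, List.isChain_cons_cons] at hp
    rw [map_cons, edges_cons, map_cons, edges_cons, List.isChain_cons_cons]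
    refine ⟨?_, isChain_ne_edges_map f hf (.cons h' q) hp.2⟩
    rw [Sym2.eq_swap, Ne, Sym2.congr_right] at hp ⊢
    exact fun hfuw => hp.1 (hf _ h.symm h' hfuw)

theorem IsAcyclic.comap_of_injOn_neighborSet (f : G →g G')
    (hf : ∀ v, Set.InjOn f (G.neighborSet v)) (h : G'.IsAcyclic) : G.IsAcyclic := by
  intro u c hc
  have hpath : (c.map f).IsPath :=
    (h.isPath_iff_isChain _).2 <| c.isChain_ne_edges_map f hf hc.edges_nodup.isChain
  exact hc.not_nil (by simpa using Walk.isPath_iff_nil.1 hpath)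

end SimpleGraph

section FriendsAndStrangers

variable {V W : Type*} {X : SimpleGraph V} {Y : SimpleGraph W}

theorem FS.exists_eq_swap_trans_of_adj [DecidableEq V] {σ τ : V ≃ W} (h : (FS X Y).Adj σ τ) :
    ∃ a b, X.Adj a b ∧ Y.Adj (σ a) (σ b) ∧ τ = (Equiv.swap a b).trans σ := by
  obtain ⟨a, b, hab, hY, ha, hb, hc⟩ := h
  refine ⟨a, b, hab, hY, Equiv.ext fun x => ?_⟩
  rcases eq_or_ne x a with rfl | hxa
  · simpa using ha
  rcases eq_or_ne x b with rfl | hxb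
  · simpa using hb
  simpa [Equiv.swap_apply_of_ne_of_ne hxa hxb] using hc x hxa hxb

theorem FS.adj_symm_apply_and_eq_swap_trans_of_adj [DecidableEq V] {c : W}
    (hY : ∀ x y, Y.Adj x y → x = c ∨ y = c)
    {σ τ : V ≃ W} (h : (FS X Y).Adj σ τ) :
    X.Adj (σ.symm c) (τ.symm c) ∧ τ = (Equiv.swap (σ.symm c) (τ.symm c)).trans σ := by
  obtain ⟨a, b, hab, hYab, rfl⟩ := FS.exists_eq_swap_trans_of_adj h
  rcases hY _ _ hYab with ha | hb
  · have : σ.symm c = a := σ.symm_apply_eq.2 ha.symm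
    simpa [this] using hab
  · have : σ.symm c = b := σ.symm_apply_eq.2 hb.symm
    simpa [this, Equiv.swap_comm] using hab.symm

def FS.preimageHom (c : W) (hY : ∀ x y, Y.Adj x y → x = c ∨ y = c) : FS X Y →g X where
  toFun σ := σ.symm c
  map_rel' h := by classical exact (FS.adj_symm_apply_and_eq_swap_trans_of_adj hY h).1

theorem FS.injOn_neighborSet_preimageHom (c : W) (hY : ∀ x y, Y.Adj x y → x = c ∨ y = c)
    (σ : V ≃ W) : Set.InjOn (FS.preimageHom (X := X) c hY) ((FS X Y).neighborSet σ) := by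
  classical
  intro τ hτ τ' hτ' heq
  rw [(FS.adj_symm_apply_and_eq_swap_trans_of_adj hY hτ).2,
    (FS.adj_symm_apply_and_eq_swap_trans_of_adj hY hτ').2]
  exact congrArg (fun x => (Equiv.swap (σ.symm c) x).trans σ) heq

theorem isAcyclic_FS_of_forall_adj_center (c : W) (hY : ∀ x y, Y.Adj x y → x = c ∨ y = c)
    (hX : X.IsAcyclic) : (FS X Y).IsAcyclic :=
  hX.comap_of_injOn_neighborSet (FS.preimageHom c hY) (FS.injOn_neighborSet_preimageHom c hY)

end FriendsAndStrangers

theorem stmt9_general {V : Type} (n : ℕ)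
    (X : SimpleGraph V) (hX : X.IsAcyclic) :
    (FS X (_root_.starGraph n)).IsAcyclic := by
  rcases n.eq_zero_or_pos with rfl | hn
  · exact IsAcyclic.of_subsingleton
  · exact isAcyclic_FS_of_forall_adj_center ⟨n - 1, by omega⟩
      (fun _ _ h => h.2.imp Fin.ext Fin.ext) hX

/-- If `X` is acyclic then `FS(X, Star_n)` is acyclic. -/
theorem stmt9 {V : Type} [Fintype V] (n : ℕ) (hV : Fintype.card V = n)
    (X : SimpleGraph V) (hX : X.IsAcyclic) :
    (FS X (_root_.starGraph n)).IsAcyclic :=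
  stmt9_general n X hX
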